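/- Let L be a finite-dimensional solvable Lie-like algebra^{2-nd} over an algebraically closed field k of characteristic 0, with dim L ≥ 1. Then L ≠ 𝒟²L where 𝒟²L := Σ_{s∈S} ⟨L, L⟩_s, and consequently there exist an ideal 𝒜 of L and x ∈ L \\ 𝒜 such that ⟨L,L⟩_s ⊆ 𝒜 for all s ∈ S and L = 𝒜 ⊕ k·x as vector spaces. -/

import Mathlib

/-- The derived series of a Lie-like algebra^{2-nd}: 𝒟¹L = L,
    𝒟^{n+1}L = Σ_s ⟨𝒟ⁿL, 𝒟ⁿL⟩_s.  (Index shifted: `Dseries br 0 = 𝒟¹L`.) -/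
def Dseries {K S L : Type*} [Field K] [AddCommGroup L] [Module K L]
    (br : S → L →ₗ[K] L →ₗ[K] L) : ℕ → Submodule K L
  | 0 => ⊤
  | n + 1 => ⨆ s : S, Submodule.span K
      {w : L | ∃ a ∈ Dseries br n, ∃ b ∈ Dseries br n, w = br s a b}

theorem Submodule.exists_isCompl_span_singleton_of_ne_top {K V : Type*} [DivisionRing K]
    [AddCommGroup V] [Module K V] {p : Submodule K V} (hp : p ≠ ⊤) :
    ∃ (A : Submodule K V) (x : V), p ≤ A ∧ x ∉ A ∧ IsCompl A (K ∙ x) := by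
  obtain ⟨A, hA, hpA⟩ := (eq_top_or_exists_le_coatom p).resolve_left hp
  obtain ⟨x, -, hx⟩ := SetLike.exists_of_lt hA.lt_top
  exact ⟨A, x, hpA, hx, isCompl_span_singleton_of_isCoatom_of_notMem hA hx⟩

section Dseries

variable {K S L : Type*} [Field K] [AddCommGroup L] [Module K L]
  (br : S → L →ₗ[K] L →ₗ[K] L)

theorem apply_mem_Dseries_one (s : S) (a b : L) : br s a b ∈ Dseries br 1 :=
  le_iSup (fun s => Submodule.span K
    {w : L | ∃ a ∈ Dseries br 0, ∃ b ∈ Dseries br 0, w = br s a b}) s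
    (Submodule.subset_span ⟨a, trivial, b, trivial, rfl⟩)

theorem Dseries_eq_top_of_Dseries_one_eq_top (h : Dseries br 1 = ⊤) (n : ℕ) :
    Dseries br n = ⊤ := by
  induction n with
  | zero => rfl
  | succ n ih =>
    rw [← h]
    simp only [Dseries, ih]

theorem Dseries_one_ne_top [Nontrivial L] (hsolv : ∃ n, Dseries br n = ⊥) :
    Dseries br 1 ≠ ⊤ := fun h => by
  obtain ⟨n, hn⟩ := hsolv
  exact top_ne_bot (Dseries_eq_top_of_Dseries_one_eq_top br h n ▸ hn)

end Dseries

theorem stmt_11_general {K : Type*} [Field K]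
    {S : Type*}
    {L : Type*} [AddCommGroup L] [Module K L]
    (br : S → L →ₗ[K] L →ₗ[K] L)
    (hsolv : ∃ n : ℕ, Dseries br n = ⊥)
    (hdim : 1 ≤ Module.finrank K L) :
    Dseries br 1 ≠ ⊤ ∧
    ∃ (A : Submodule K L) (x : L),
      x ∉ A ∧
      (∀ (s : S) (a b : L), br s a b ∈ A) ∧
      (∀ (s : S), ∀ a ∈ A, ∀ z : L, br s a z ∈ A ∧ br s z a ∈ A) ∧
      IsCompl A (Submodule.span K {x}) := by
  have : Nontrivial L := Module.nontrivial_of_finrank_pos hdim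
  have hne := Dseries_one_ne_top br hsolv
  obtain ⟨A, x, hA, hx, hcompl⟩ := Submodule.exists_isCompl_span_singleton_of_ne_top hne
  have hbr : ∀ s a b, br s a b ∈ A := fun s a b => hA (apply_mem_Dseries_one br s a b)
  exact ⟨hne, A, x, hx, hbr, fun s a _ z => ⟨hbr s a z, hbr s z a⟩, hcompl⟩

/-- For a finite-dimensional solvable Lie-like algebra^{2-nd} with dim L ≥ 1,
    L ≠ 𝒟²L, and there is a codimension-one ideal 𝒜 containing all brackets with
    L = 𝒜 ⊕ k·x. -/
theorem stmt_11 {K : Type*} [Field K] [IsAlgClosed K] [CharZero K]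
    {S : Type*} [Nonempty S]
    {L : Type*} [AddCommGroup L] [Module K L] [FiniteDimensional K L]
    (br : S → L →ₗ[K] L →ₗ[K] L)
    (hjac : ∀ (s h : S) (x y z : L),
      br h (br s x y) z = br s x (br h y z) + br s (br h x z) y)
    (hsw : ∀ (s h : S) (x y z : L), br h (br s x y) z = br s (br h x y) z)
    (hsolv : ∃ n : ℕ, Dseries br n = ⊥)
    (hdim : 1 ≤ Module.finrank K L) :
    Dseries br 1 ≠ ⊤ ∧
    ∃ (A : Submodule K L) (x : L),
      x ∉ A ∧
      (∀ (s : S) (a b : L), br s a b ∈ A) ∧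
      (∀ (s : S), ∀ a ∈ A, ∀ z : L, br s a z ∈ A ∧ br s z a ∈ A) ∧
      IsCompl A (Submodule.span K {x}) :=
  stmt_11_general br hsolv hdim
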